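/- Let N ≥ 1, let β be a real number, and let x ∈ ℝ^N satisfy 0 < x_i − x_j < π for all 1 ≤ j < i ≤ N (so that sin(x_i − x_j) > 0 for all i ≠ j). Define Ψ : U → ℝ on a neighbourhood U of x by Ψ(y) = Π_{1 ≤ j < i ≤ N} sin(x_i − x_j replaced by y_i − y_j)^β, i.e. Ψ(y) = Π_{j<i} (sin(y_i − y_j))^β. Then −(1/2) Σ_{k=1}^{N} ∂_k² Ψ(x) + ( Σ_{1 ≤ i < j ≤ N} β(β−1)/sin²(x_i − x_j) ) Ψ(x) = (β² N(N²−1)/6) Ψ(x). In other words, Ψ is an eigenfunction of the Calogero–Sutherland Hamiltonian H_CS = −(1/2) Σ_k ∂_k² + Σ_{i<j} β(β−1)/sin²(x_i − x_j) with eigenvalue β² N(N²−1)/6. -/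

import Mathlib

open Finset Real Filter Topology

/-!
Near `x` every `sin (y i - y j)` with `j < i` is positive, so `Ψ = exp L` with
`L y = β ∑_{j<i} log sin (y i - y j)`, and `∂ₖ² Ψ = Ψ ((∂ₖ L)² + ∂ₖ² L)` where
`∂ₖ L = β ∑_j cot (x k - x j)` and `∑ₖ ∂ₖ² L = -2β ∑_{j<i} 1 / sin² (x i - x j)`.
Expanding `∑ₖ (∑_j cot (x k - x j))²`, the terms over ordered triples of distinct indices
sum to `-N(N-1)(N-2)/3` because `cot a cot b + cot b cot c + cot c cot a = 1` whenever
`a + b + c = 0`; with `cot² = 1 / sin² - 1` this gives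
`∑ₖ (∑_j cot (x k - x j))² = 2 ∑_{j<i} 1 / sin² (x i - x j) - N(N² - 1)/3`,
and the `1 / sin²` terms then cancel against the potential.
-/

namespace Real

lemma cot_neg (x : ℝ) : cot (-x) = -cot x := by
  rw [cot_eq_cos_div_sin, cot_eq_cos_div_sin, cos_neg, sin_neg, div_neg]

lemma cot_sq {x : ℝ} (hx : sin x ≠ 0) : cot x ^ 2 = 1 / sin x ^ 2 - 1 := by
  rw [cot_eq_cos_div_sin, div_pow, cos_sq']
  field_simp

lemma hasDerivAt_cot {x : ℝ} (hx : sin x ≠ 0) : HasDerivAt cot (-1 / sin x ^ 2) x := by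
  rw [show cot = fun t => cos t / sin t from funext cot_eq_cos_div_sin]
  refine ((hasDerivAt_cos x).div (hasDerivAt_sin x) hx).congr_deriv ?_
  rw [← sin_sq_add_cos_sq x]
  ring

lemma hasDerivAt_log_sin {x : ℝ} (hx : sin x ≠ 0) :
    HasDerivAt (fun t => log (sin t)) (cot x) x := by
  simpa [cot_eq_cos_div_sin] using (hasDerivAt_sin x).log hx

lemma cot_sub_mul_cot_sub_cyclic {u v w : ℝ} (huv : sin (u - v) ≠ 0) (hvw : sin (v - w) ≠ 0)
    (hwu : sin (w - u) ≠ 0) :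
    cot (u - v) * cot (u - w) + cot (v - w) * cot (v - u) + cot (w - u) * cot (w - v) = -1 := by
  rw [show v - u = -(u - v) by ring, show u - w = -(w - u) by ring,
    show w - v = -(v - w) by ring, cot_neg, cot_neg, cot_neg]
  rw [show w - u = -((u - v) + (v - w)) by ring] at hwu ⊢
  rw [sin_neg, neg_ne_zero] at hwu
  generalize u - v = a at *
  generalize v - w = b at *
  rw [sin_add] at hwu
  simp only [cot_eq_cos_div_sin, cos_neg, sin_neg, cos_add, sin_add]
  field_simp
  ring

end Real

lemma sum_single_sub_single_sq {ι : Type*} [Fintype ι] [DecidableEq ι] {i j : ι} (h : i ≠ j) :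
    ∑ k, ((Pi.single k 1 : ι → ℝ) i - (Pi.single k 1 : ι → ℝ) j) ^ 2 = 2 := by
  norm_num [sub_sq, Pi.single_apply, sum_add_distrib, sum_sub_distrib, h]

section PairSums

variable {ι : Type*} [Fintype ι] [LinearOrder ι]

lemma sum_sum_gt_eq_sum_sum_lt {M : Type*} [AddCommMonoid M] (f : ι → ι → M) :
    ∑ i, ∑ j ∈ univ.filter (i < ·), f i j = ∑ i, ∑ j ∈ univ.filter (· < i), f j i :=
  Finset.sum_comm' (by simp)

lemma sum_sum_eq_two_nsmul_sum_sum_lt_add_sum {M : Type*} [AddCommMonoid M] {G : ι → ι → M}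
    (hG : ∀ i j, G i j = G j i) :
    ∑ i, ∑ j, G i j = 2 • ∑ i, ∑ j ∈ univ.filter (· < i), G i j + ∑ i, G i i := by
  have hsplit : ∀ i, ∑ j, G i j = ∑ j ∈ univ.filter (· < i), G i j
      + ∑ j ∈ univ.filter (i < ·), G i j + G i i := by
    intro i
    rw [sum_filter, sum_filter, ← sum_add_distrib, ← sum_ite_eq_of_mem' univ i (G i) (mem_univ i),
      ← sum_add_distrib]
    refine sum_congr rfl fun j _ => ?_
    rcases lt_trichotomy j i with h | rfl | h
    · simp [h, h.ne, not_lt_of_gt h]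
    · simp
    · simp [h, h.ne', not_lt_of_gt h]
  simp only [hsplit, sum_add_distrib, sum_sum_gt_eq_sum_sum_lt, ← hG _ _]
  rw [two_nsmul]

lemma sum_sum_lt_mul_single_sub {C : ι → ι → ℝ} (hC : ∀ i j, C j i = -C i j) (k : ι) :
    ∑ i, ∑ j ∈ univ.filter (· < i),
      C i j * ((Pi.single k 1 : ι → ℝ) i - (Pi.single k 1 : ι → ℝ) j) = ∑ j, C k j := by
  set e : ι → ℝ := Pi.single k 1 with he
  have h := sum_sum_eq_two_nsmul_sum_sum_lt_add_sum (G := fun i j => C i j * (e i - e j))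
    fun i j => by rw [hC i j]; ring
  have hfull : ∑ i, ∑ j, C i j * (e i - e j) = 2 * ∑ j, C k j := by
    simp only [he, Pi.single_apply, mul_sub, mul_ite, mul_one, mul_zero, sum_sub_distrib,
      sum_ite_irrel, sum_const_zero, sum_ite_eq', mem_univ, ↓reduceIte, hC _ k, sum_neg_distrib,
      mul_neg]
    ring
  simp only [sub_self, mul_zero, sum_const_zero, add_zero, two_nsmul, hfull] at h
  linarith

end PairSums

section CyclicTriples

variable {ι : Type*} [Fintype ι] [DecidableEq ι]

lemma sq_sum_eq_sum_sq_add_sum_sum_distinct {C : ι → ι → ℝ} (hC : ∀ k, C k k = 0) (k : ι) :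
    (∑ j, C k j) ^ 2 = ∑ j, C k j ^ 2 +
      ∑ j, ∑ l, if k ≠ j ∧ k ≠ l ∧ j ≠ l then C k j * C k l else 0 := by
  rw [sq, sum_mul_sum, ← sum_add_distrib]
  refine sum_congr rfl fun j _ => ?_
  rw [← sum_ite_eq_of_mem univ j (fun l => C k l ^ 2) (mem_univ j), ← sum_add_distrib]
  refine sum_congr rfl fun l _ => ?_
  by_cases hjl : j = l
  · subst hjl; simp [sq]
  by_cases hkj : k = j
  · subst hkj; simp [hC, hjl]
  by_cases hkl : k = l
  · subst hkl; simp [hC, hjl]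
  simp [hjl, hkj, hkl]

lemma card_distinct_triples :
    ∑ k : ι, ∑ j : ι, ∑ l : ι, (if k ≠ j ∧ k ≠ l ∧ j ≠ l then 1 else 0 : ℝ) =
      Fintype.card ι * (Fintype.card ι - 1) * (Fintype.card ι - 2) := by
  have hinner : ∀ k j : ι, ∑ l : ι, (if k ≠ j ∧ k ≠ l ∧ j ≠ l then 1 else 0 : ℝ) =
      if k ≠ j then (Fintype.card ι - 2 : ℝ) else 0 := by
    intro k j
    by_cases hkj : k = j
    · simp [hkj]
    have hfilter : univ.filter (fun l => k ≠ j ∧ k ≠ l ∧ j ≠ l) = (univ.erase k).erase j := by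
      ext l; simp [hkj]; tauto
    rw [sum_boole, hfilter, cast_card_erase_of_mem (by simp [Ne.symm hkj]),
      cast_card_erase_of_mem (mem_univ k), card_univ, if_pos hkj]
    ring
  simp only [hinner, ← sum_filter, sum_const, filter_ne, nsmul_eq_mul,
    cast_card_erase_of_mem (mem_univ _), card_univ]
  ring

lemma sum_sq_sum_eq_of_cyclic {C : ι → ι → ℝ} (hC : ∀ k, C k k = 0)
    (hcyc : ∀ k j l, k ≠ j → k ≠ l → j ≠ l →
      C k j * C k l + C j l * C j k + C l k * C l j = -1) :
    ∑ k, (∑ j, C k j) ^ 2 = ∑ k, ∑ j, C k j ^ 2 -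
      Fintype.card ι * (Fintype.card ι - 1) * (Fintype.card ι - 2) / 3 := by
  rw [sum_congr rfl fun k _ => sq_sum_eq_sum_sq_add_sum_sum_distinct hC k, sum_add_distrib]
  set F : ι → ι → ι → ℝ := fun k j l => if k ≠ j ∧ k ≠ l ∧ j ≠ l then C k j * C k l else 0
  have hsum_rot : ∀ G : ι → ι → ι → ℝ,
      ∑ k, ∑ j, ∑ l, G k j l = ∑ k, ∑ j, ∑ l, G j l k := fun G => by
    symm; rw [sum_comm]; exact sum_congr rfl fun _ _ => sum_comm
  have hdist_rot : ∀ k j l : ι, k ≠ j ∧ k ≠ l ∧ j ≠ l → j ≠ l ∧ j ≠ k ∧ l ≠ k :=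
    fun _ _ _ ⟨h₁, h₂, h₃⟩ => ⟨h₃, h₁.symm, h₂.symm⟩
  have hcyclic : ∀ k j l,
      F k j l + F j l k + F l k j = -if k ≠ j ∧ k ≠ l ∧ j ≠ l then 1 else 0 := by
    intro k j l
    by_cases h : k ≠ j ∧ k ≠ l ∧ j ≠ l
    · simp only [F, if_pos h, if_pos (hdist_rot _ _ _ h),
        if_pos (hdist_rot _ _ _ (hdist_rot _ _ _ h))]
      linarith [hcyc k j l h.1 h.2.1 h.2.2]
    · have h' : ¬(j ≠ l ∧ j ≠ k ∧ l ≠ k) := fun h' => h (hdist_rot _ _ _ (hdist_rot _ _ _ h'))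
      have h'' : ¬(l ≠ k ∧ l ≠ j ∧ k ≠ j) := fun h'' => h (hdist_rot _ _ _ h'')
      simp only [F, if_neg h, if_neg h', if_neg h'', add_zero, neg_zero]
  have hT : 3 * ∑ k, ∑ j, ∑ l, F k j l =
      -(Fintype.card ι * (Fintype.card ι - 1) * (Fintype.card ι - 2)) :=
    calc 3 * ∑ k, ∑ j, ∑ l, F k j l = ∑ k, ∑ j, ∑ l, (F k j l + F j l k + F l k j) := by
          have h : ∑ k, ∑ j, ∑ l, F j l k = ∑ k, ∑ j, ∑ l, F l k j := hsum_rot fun k j l => F j l k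
          simp only [sum_add_distrib]
          linarith [hsum_rot F]
      _ = _ := by simp only [hcyclic, sum_neg_distrib, card_distinct_triples]
  linarith

end CyclicTriples

lemma fderiv_fderiv_apply_of_eventuallyEq_exp {E : Type*} [NormedAddCommGroup E]
    [NormedSpace ℝ E] {Ψ L : E → ℝ} {L' : E → E →L[ℝ] ℝ} {D : E →L[ℝ] ℝ} {x v : E}
    (hΨ : Ψ =ᶠ[𝓝 x] fun y => exp (L y)) (hL : ∀ᶠ y in 𝓝 x, HasFDerivAt L (L' y) y)
    (hD : HasFDerivAt (fun y => L' y v) D x) :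
    fderiv ℝ (fun y => fderiv ℝ Ψ y v) x v = Ψ x * (L' x v ^ 2 + D v) := by
  have hexp : ∀ᶠ y in 𝓝 x, HasFDerivAt (fun y => exp (L y)) (exp (L y) • L' y) y :=
    hL.mono fun y hy => (hasDerivAt_exp (L y)).comp_hasFDerivAt y hy
  have hfirst : (fun y => fderiv ℝ Ψ y v) =ᶠ[𝓝 x] fun y => exp (L y) * L' y v := by
    filter_upwards [hΨ.eventuallyEq_nhds, hexp] with y hΨy hy
    rw [hΨy.fderiv_eq, hy.fderiv, smul_apply, smul_eq_mul]
  rw [hfirst.fderiv_eq, (hexp.self_of_nhds.fun_mul hD).fderiv, hΨ.self_of_nhds]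
  simp only [add_apply, smul_apply, smul_eq_mul]
  ring

section GroundState

variable {ι : Type*} [Fintype ι] [LinearOrder ι]

lemma hasFDerivAt_sum_sum_lt_mul_comp_sub (a : ι → ι → ℝ) {φ φ' : ℝ → ℝ} {y : ι → ℝ}
    (hφ : ∀ i j, j < i → HasDerivAt φ (φ' (y i - y j)) (y i - y j)) :
    HasFDerivAt (fun y : ι → ℝ => ∑ i, ∑ j ∈ univ.filter (· < i), a i j * φ (y i - y j))
      (∑ i, ∑ j ∈ univ.filter (· < i), (a i j * φ' (y i - y j)) •
        ((ContinuousLinearMap.proj i : (ι → ℝ) →L[ℝ] ℝ) - ContinuousLinearMap.proj j)) y := by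
  refine HasFDerivAt.fun_sum fun i _ => HasFDerivAt.fun_sum fun j hj => ?_
  have hsub : HasFDerivAt (fun y : ι → ℝ => y i - y j)
      ((ContinuousLinearMap.proj i : (ι → ℝ) →L[ℝ] ℝ) - ContinuousLinearMap.proj j) y :=
    (hasFDerivAt_apply i y).fun_sub (hasFDerivAt_apply j y)
  rw [mul_smul]
  exact ((hφ i j (mem_filter.1 hj).2).comp_hasFDerivAt y hsub).const_mul (a i j)

variable {x : ι → ℝ}

lemma sum_sq_sum_cot_sub_eq (hx : ∀ i j, i ≠ j → sin (x i - x j) ≠ 0) :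
    ∑ k, (∑ j, cot (x k - x j)) ^ 2 =
      2 * ∑ i, ∑ j ∈ univ.filter (· < i), 1 / sin (x i - x j) ^ 2 -
        Fintype.card ι * ((Fintype.card ι : ℝ) ^ 2 - 1) / 3 := by
  -- the diagonal terms vanish because `cot 0 = cos 0 / sin 0 = 0` in Lean
  have hdiag : ∀ k, cot (x k - x k) = 0 := fun k => by
    rw [sub_self, cot_eq_cos_div_sin, sin_zero, div_zero]
  rw [sum_sq_sum_eq_of_cyclic (C := fun k j => cot (x k - x j)) hdiag fun k j l hkj hkl hjl =>
    cot_sub_mul_cot_sub_cyclic (hx k j hkj) (hx j l hjl) (hx l k hkl.symm)]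
  have hsq := sum_sum_eq_two_nsmul_sum_sum_lt_add_sum (G := fun k j => cot (x k - x j) ^ 2)
    fun k j => by rw [← neg_sub, cot_neg, neg_sq]
  have hcot : ∑ i, ∑ j ∈ univ.filter (· < i), cot (x i - x j) ^ 2 =
      ∑ i, ∑ j ∈ univ.filter (· < i), (1 / sin (x i - x j) ^ 2 - 1) :=
    sum_congr rfl fun i _ => sum_congr rfl fun j hj => cot_sq (hx i j (mem_filter.1 hj).2.ne')
  have hpairs : 2 * ∑ i : ι, ∑ j ∈ univ.filter (· < i), (1 : ℝ) =
      (Fintype.card ι : ℝ) ^ 2 - Fintype.card ι := by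
    have h := sum_sum_eq_two_nsmul_sum_sum_lt_add_sum (G := fun _ _ : ι => (1 : ℝ)) fun _ _ => rfl
    rw [two_nsmul] at h
    simp only [sum_const, card_univ, nsmul_eq_mul, mul_one] at h ⊢
    linarith
  simp only [hsq, hcot, hdiag, sum_sub_distrib, two_nsmul, zero_pow two_ne_zero, sum_const_zero,
    add_zero]
  linear_combination (-1 : ℝ) * hpairs

noncomputable def groundState (β : ℝ) (y : ι → ℝ) : ℝ :=
  ∏ i, ∏ j ∈ univ.filter (· < i), sin (y i - y j) ^ β

lemma eventually_sin_sub_pos (hx : ∀ i j, j < i → 0 < sin (x i - x j)) :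
    ∀ᶠ y in 𝓝 x, ∀ i j, j < i → 0 < sin (y i - y j) := by
  simp only [eventually_all]
  intro i j hij
  have hcont : Continuous fun y : ι → ℝ => sin (y i - y j) := by fun_prop
  exact hcont.continuousAt.eventually (lt_mem_nhds (hx i j hij))

lemma groundState_eventuallyEq_exp (β : ℝ) (hx : ∀ i j, j < i → 0 < sin (x i - x j)) :
    groundState β =ᶠ[𝓝 x]
      fun y => exp (∑ i, ∑ j ∈ univ.filter (· < i), β * log (sin (y i - y j))) := by
  filter_upwards [eventually_sin_sub_pos hx] with y hy
  simp only [groundState, exp_sum]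
  refine prod_congr rfl fun i _ => prod_congr rfl fun j hj => ?_
  rw [rpow_def_of_pos (hy i j (mem_filter.1 hj).2), mul_comm]

lemma fderiv_fderiv_groundState (β : ℝ) (hx : ∀ i j, j < i → 0 < sin (x i - x j)) (v : ι → ℝ) :
    fderiv ℝ (fun y => fderiv ℝ (groundState β) y v) x v = groundState β x *
      ((∑ i, ∑ j ∈ univ.filter (· < i), β * (v i - v j) * cot (x i - x j)) ^ 2 -
        ∑ i, ∑ j ∈ univ.filter (· < i), β * (v i - v j) ^ 2 / sin (x i - x j) ^ 2) := by
  set L' : (ι → ℝ) → (ι → ℝ) →L[ℝ] ℝ := fun y => ∑ i, ∑ j ∈ univ.filter (· < i),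
    (β * cot (y i - y j)) •
      ((ContinuousLinearMap.proj i : (ι → ℝ) →L[ℝ] ℝ) - ContinuousLinearMap.proj j)
  have hL'v : ∀ y, L' y v =
      ∑ i, ∑ j ∈ univ.filter (· < i), β * (v i - v j) * cot (y i - y j) := by
    intro y
    simp only [L', _root_.sum_apply, smul_apply, sub_apply, ContinuousLinearMap.proj_apply,
      smul_eq_mul, mul_right_comm]
  have hL : ∀ᶠ y in 𝓝 x, HasFDerivAt
      (fun y => ∑ i, ∑ j ∈ univ.filter (· < i), β * log (sin (y i - y j))) (L' y) y :=
    (eventually_sin_sub_pos hx).mono fun y hy =>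
      hasFDerivAt_sum_sum_lt_mul_comp_sub (fun _ _ => β) fun i j hij =>
        hasDerivAt_log_sin (hy i j hij).ne'
  have hD := hasFDerivAt_sum_sum_lt_mul_comp_sub (y := x) (fun i j => β * (v i - v j))
    (φ' := fun t => -1 / sin t ^ 2) fun i j hij => hasDerivAt_cot (hx i j hij).ne'
  rw [← funext hL'v] at hD
  rw [fderiv_fderiv_apply_of_eventuallyEq_exp (groundState_eventuallyEq_exp β hx) hL hD, hL'v]
  simp only [_root_.sum_apply, smul_apply, sub_apply, ContinuousLinearMap.proj_apply, smul_eq_mul,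
    sub_eq_add_neg _ (∑ _, _), ← sum_neg_distrib]
  congr 2
  exact sum_congr rfl fun i _ => sum_congr rfl fun j _ => by ring

lemma sum_fderiv_fderiv_single_groundState (β : ℝ) (hx : ∀ i j, j < i → 0 < sin (x i - x j)) :
    ∑ k, fderiv ℝ (fun y => fderiv ℝ (groundState β) y (Pi.single k 1)) x (Pi.single k 1) =
      groundState β x * (β ^ 2 * ∑ k, (∑ j, cot (x k - x j)) ^ 2 -
        2 * β * ∑ i, ∑ j ∈ univ.filter (· < i), 1 / sin (x i - x j) ^ 2) := by
  simp only [fderiv_fderiv_groundState β hx, ← mul_sum]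
  congr 1
  have hfirst : ∀ k, ∑ i, ∑ j ∈ univ.filter (· < i),
      β * ((Pi.single k 1 : ι → ℝ) i - (Pi.single k 1 : ι → ℝ) j) * cot (x i - x j) =
        β * ∑ j, cot (x k - x j) := fun k => by
    rw [← sum_sum_lt_mul_single_sub (C := fun i j => cot (x i - x j))
      (fun i j => by rw [← neg_sub, cot_neg]) k, mul_sum]
    exact sum_congr rfl fun i _ => by rw [mul_sum]; exact sum_congr rfl fun j _ => by ring
  have hsecond : ∑ k, ∑ i, ∑ j ∈ univ.filter (· < i),
      β * ((Pi.single k 1 : ι → ℝ) i - (Pi.single k 1 : ι → ℝ) j) ^ 2 / sin (x i - x j) ^ 2 =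
        2 * β * ∑ i, ∑ j ∈ univ.filter (· < i), 1 / sin (x i - x j) ^ 2 := by
    rw [sum_comm, mul_sum]
    refine sum_congr rfl fun i _ => ?_
    rw [sum_comm, mul_sum]
    refine sum_congr rfl fun j hj => ?_
    rw [← sum_div, ← mul_sum, sum_single_sub_single_sq (mem_filter.1 hj).2.ne']
    ring
  rw [sum_sub_distrib, hsecond]
  simp only [hfirst, mul_pow, ← mul_sum]

end GroundState

theorem CS_ground_state_eigenfunction_general (N : ℕ) (β : ℝ) (x : Fin N → ℝ)
    (hx : ∀ i j : Fin N, j < i → 0 < x i - x j ∧ x i - x j < Real.pi)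
    (Ψ : (Fin N → ℝ) → ℝ)
    (hΨ : ∀ y : Fin N → ℝ,
      Ψ y = ∏ i : Fin N, ∏ j ∈ univ.filter (fun j => j < i), Real.sin (y i - y j) ^ β) :
    -(1 / 2) * ∑ k : Fin N,
        fderiv ℝ (fun y => fderiv ℝ Ψ y (Pi.single k 1)) x (Pi.single k 1)
      + (∑ i : Fin N, ∑ j ∈ univ.filter (fun j => i < j),
          β * (β - 1) / Real.sin (x i - x j) ^ 2) * Ψ x
      = β ^ 2 * (N : ℝ) * ((N : ℝ) ^ 2 - 1) / 6 * Ψ x := by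
  obtain rfl : Ψ = groundState β := funext hΨ
  have hsin : ∀ i j, j < i → 0 < sin (x i - x j) := fun i j h =>
    sin_pos_of_pos_of_lt_pi (hx i j h).1 (hx i j h).2
  have hne : ∀ i j, i ≠ j → sin (x i - x j) ≠ 0 := fun i j h => by
    rcases h.lt_or_gt with h | h
    · rw [← neg_sub, sin_neg, neg_ne_zero]
      exact (hsin j i h).ne'
    · exact (hsin i j h).ne'
  have hpotential : ∑ i, ∑ j ∈ univ.filter (fun j => i < j), β * (β - 1) / sin (x i - x j) ^ 2 =
      β * (β - 1) * ∑ i, ∑ j ∈ univ.filter (· < i), 1 / sin (x i - x j) ^ 2 := by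
    rw [sum_sum_gt_eq_sum_sum_lt, mul_sum]
    refine sum_congr rfl fun i _ => ?_
    rw [mul_sum]
    exact sum_congr rfl fun j _ => by rw [← neg_sub (x i), sin_neg, neg_sq]; ring
  rw [sum_fderiv_fderiv_single_groundState β hsin, sum_sq_sum_cot_sub_eq hne, hpotential,
    Fintype.card_fin]
  ring

/-- The Calogero–Sutherland ground-state wavefunction
`Ψ(y) = Π_{j<i} sin(y_i − y_j)^β` is an eigenfunction of
`H_CS = −(1/2)Σ_k ∂_k² + Σ_{i<j} β(β−1)/sin²(x_i−x_j)` with eigenvalue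
`β² N(N²−1)/6`. -/
theorem CS_ground_state_eigenfunction (N : ℕ) (hN : 1 ≤ N) (β : ℝ) (x : Fin N → ℝ)
    (hx : ∀ i j : Fin N, j < i → 0 < x i - x j ∧ x i - x j < Real.pi)
    (Ψ : (Fin N → ℝ) → ℝ)
    (hΨ : ∀ y : Fin N → ℝ,
      Ψ y = ∏ i : Fin N, ∏ j ∈ univ.filter (fun j => j < i), Real.sin (y i - y j) ^ β) :
    -(1 / 2) * ∑ k : Fin N,
        fderiv ℝ (fun y => fderiv ℝ Ψ y (Pi.single k 1)) x (Pi.single k 1)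
      + (∑ i : Fin N, ∑ j ∈ univ.filter (fun j => i < j),
          β * (β - 1) / Real.sin (x i - x j) ^ 2) * Ψ x
      = β ^ 2 * (N : ℝ) * ((N : ℝ) ^ 2 - 1) / 6 * Ψ x :=
  CS_ground_state_eigenfunction_general N β x hx Ψ hΨ
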